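/- arXiv:2205.14314 — 4 statements merged into one kernel-verified Lean document; each statement's English description precedes it below -/
import Mathlib

section
/- Let F : ℝ → ℝ be C¹, non-negative, with F(v) = 0 iff v = 1, and satisfying F'(v)(v−1) ≥ 0 for all v. Fix c < 1 and for s in [0, s*) with s* = ∫_c^1 dz/√(F(z)) define ψ(s) by ∫_c^{ψ(s)} dz/√(F(z)) = s. Then for every δ > 0 with 1/δ < s*, F(ψ(1/δ))/δ² ≤ (1−c)². -/
open Set intervalIntegral

/-!
By (F2') `F` is non-increasing on `(-∞, 1]`, so on `[c, ψ s]` the integrand `F^{-1/2}` is at most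
its value at the right endpoint. Hence `s ≤ (ψ s - c) / √F(ψ s) ≤ (1 - c) / √F(ψ s)`; taking
`s = 1/δ` and squaring gives `F(ψ(1/δ)) ≤ (1 - c)² δ²`.
-/

theorem antitoneOn_Iic_of_deriv_mul_sub_nonneg {F : ℝ → ℝ} {a : ℝ} (hF : Differentiable ℝ F)
    (hderiv : ∀ v, 0 ≤ deriv F v * (v - a)) : AntitoneOn F (Iic a) := by
  refine antitoneOn_of_deriv_nonpos (convex_Iic a) hF.continuous.continuousOn
    hF.differentiableOn fun x hx => ?_
  rw [interior_Iic, mem_Iio] at hx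
  nlinarith [hderiv x]

theorem integral_inv_sqrt_le_of_antitoneOn {F : ℝ → ℝ} {a b : ℝ} (hab : a ≤ b)
    (hF : AntitoneOn F (Icc a b)) (hFb : 0 < F b) :
    ∫ z in a..b, (√(F z))⁻¹ ≤ (b - a) / √(F b) := by
  have hpos : ∀ z ∈ Icc a b, 0 < √(F z) := fun z hz =>
    Real.sqrt_pos.mpr (hFb.trans_le (hF hz (right_mem_Icc.mpr hab) hz.2))
  have hmono : MonotoneOn (fun z => (√(F z))⁻¹) (Icc a b) := fun x hx y hy hxy =>
    inv_anti₀ (hpos y hy) (Real.sqrt_le_sqrt (hF hx hy hxy))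
  calc ∫ z in a..b, (√(F z))⁻¹
      ≤ ∫ _ in a..b, (√(F b))⁻¹ := by
        refine integral_mono_on hab ((uIcc_of_le hab).symm ▸ hmono).intervalIntegrable
          intervalIntegrable_const fun z hz => hmono hz (right_mem_Icc.mpr hab) hz.2
    _ = (b - a) / √(F b) := by rw [integral_const, smul_eq_mul, div_eq_mul_inv]

theorem stmt2_general (F : ℝ → ℝ) (hF1 : ContDiff ℝ 1 F)
    (hF2' : ∀ v, 0 ≤ deriv F v * (v - 1))
    (c : ℝ)
    (sStar : ℝ)
    (ψ : ℝ → ℝ)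
    (hψmem : ∀ s ∈ Ico (0 : ℝ) sStar, ψ s ∈ Ico c 1)
    (hψdef : ∀ s ∈ Ico (0 : ℝ) sStar, (∫ z in c..ψ s, (Real.sqrt (F z))⁻¹) = s)
    (δ : ℝ) (hδ : 0 < δ) (hδs : 1 / δ < sStar) :
    F (ψ (1 / δ)) / δ ^ 2 ≤ (1 - c) ^ 2 := by
  have hs : 1 / δ ∈ Ico (0 : ℝ) sStar := ⟨by positivity, hδs⟩
  obtain ⟨hcp, hp1⟩ := hψmem _ hs
  set p := ψ (1 / δ)
  rcases le_or_gt (F p) 0 with hFp | hFp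
  · exact (div_nonpos_of_nonpos_of_nonneg hFp (by positivity)).trans (sq_nonneg _)
  have hanti : AntitoneOn F (Icc c p) :=
    (antitoneOn_Iic_of_deriv_mul_sub_nonneg (hF1.differentiable one_ne_zero) hF2').mono
      fun z hz => hz.2.trans hp1.le
  have hsqrt : 0 < √(F p) := Real.sqrt_pos.mpr hFp
  have hbound : 1 / δ ≤ (1 - c) / √(F p) := by
    calc 1 / δ = ∫ z in c..p, (√(F z))⁻¹ := (hψdef _ hs).symm
      _ ≤ (p - c) / √(F p) := integral_inv_sqrt_le_of_antitoneOn hcp hanti hFp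
      _ ≤ (1 - c) / √(F p) := by gcongr
  have hroot : √(F p) ≤ (1 - c) * δ := by
    rw [div_le_div_iff₀ hδ hsqrt] at hbound
    linarith
  rw [div_le_iff₀ (by positivity), ← Real.sq_sqrt hFp.le, ← mul_pow]
  exact pow_le_pow_left₀ hsqrt.le hroot 2

theorem stmt2 (F : ℝ → ℝ) (hF1 : ContDiff ℝ 1 F) (hFnn : ∀ v, 0 ≤ F v)
    (hFzero : ∀ v, F v = 0 ↔ v = 1)
    (hF2' : ∀ v, 0 ≤ deriv F v * (v - 1))
    (c : ℝ) (hc : c < 1)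
    (sStar : ℝ) (hsStar : sStar = ∫ z in c..1, (Real.sqrt (F z))⁻¹)
    (ψ : ℝ → ℝ)
    (hψmem : ∀ s ∈ Ico (0 : ℝ) sStar, ψ s ∈ Ico c 1)
    (hψdef : ∀ s ∈ Ico (0 : ℝ) sStar, (∫ z in c..ψ s, (Real.sqrt (F z))⁻¹) = s)
    (δ : ℝ) (hδ : 0 < δ) (hδs : 1 / δ < sStar) :
    F (ψ (1 / δ)) / δ ^ 2 ≤ (1 - c) ^ 2 :=
  stmt2_general F hF1 hF2' c sStar ψ hψmem hψdef δ hδ hδs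
end

section
/- Let K be a compact subset of a bounded open set Ω ⊂ ℝ^N and for ε > 0 set S_ε = { y ∈ Ω : dist(y, K) = ε }. Fix a unit vector ν and a point x in the hyperplane orthogonal to ν such that the slice K¹_{x,ν} = { t ∈ ℝ : x + tν ∈ K } is non-empty and finite. Then for every t₀ ∈ K¹_{x,ν} there exist t_ε ∈ (S_ε)¹_{x,ν} with t_ε → t₀ as ε → 0; consequently (S_ε)¹_{x,ν} converges to K¹_{x,ν} in Hausdorff distance in ℝ. -/
open Set Filter Metric
open scoped RealInnerProductSpace

theorem stmt4 (N : ℕ) (Ω K : Set (EuclideanSpace ℝ (Fin N)))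
    (hΩo : IsOpen Ω) (hΩb : Bornology.IsBounded Ω)
    (hK : IsCompact K) (hKΩ : K ⊆ Ω)
    (ν : EuclideanSpace ℝ (Fin N)) (hν : ‖ν‖ = 1)
    (x : EuclideanSpace ℝ (Fin N)) (hx : ⟪x, ν⟫ = 0)
    (hne : {t : ℝ | x + t • ν ∈ K}.Nonempty)
    (hfin : {t : ℝ | x + t • ν ∈ K}.Finite) :
    (∀ t₀ ∈ {t : ℝ | x + t • ν ∈ K}, ∃ tε : ℝ → ℝ,
        (∀ᶠ ε in nhdsWithin 0 (Ioi (0 : ℝ)),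
          tε ε ∈ {t : ℝ | x + t • ν ∈ {y ∈ Ω | infDist y K = ε}}) ∧
        Tendsto tε (nhdsWithin 0 (Ioi (0 : ℝ))) (nhds t₀)) ∧
      Tendsto
        (fun ε : ℝ => hausdorffDist
          {t : ℝ | x + t • ν ∈ {y ∈ Ω | infDist y K = ε}}
          {t : ℝ | x + t • ν ∈ K})
        (nhdsWithin 0 (Ioi (0 : ℝ))) (nhds 0) := by
  classical
  have hKne : K.Nonempty := by obtain ⟨t₁, ht₁⟩ := hne; exact ⟨_, ht₁⟩
  set f : ℝ → ℝ := fun t => infDist (x + t • ν) K with hf_def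
  have hf : Continuous f :=
    (continuous_infDist_pt K).comp (continuous_const.add (continuous_id.smul continuous_const))
  have hf0 : ∀ t : ℝ, f t = 0 ↔ x + t • ν ∈ K := fun t =>
    (hK.isClosed.mem_iff_infDist_zero hKne).symm
  have hfnonneg : ∀ t : ℝ, 0 ≤ f t := fun t => infDist_nonneg
  obtain ⟨r, hr0, hrsub⟩ := hK.exists_thickening_subset_open hΩo hKΩ
  have hΩmem : ∀ t : ℝ, f t < r → x + t • ν ∈ Ω := fun t ht =>
    hrsub ((mem_thickening_iff_infDist_lt hKne).2 ht)
  obtain ⟨M, hM⟩ := hΩb.subset_closedBall 0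
  have habs : ∀ t : ℝ, x + t • ν ∈ Ω → |t| ≤ M := by
    intro t ht
    have h1 : ⟪x + t • ν, ν⟫ = t := by
      rw [inner_add_left, real_inner_smul_left, real_inner_self_eq_norm_sq, hν, hx]; ring
    calc |t| = |⟪x + t • ν, ν⟫| := by rw [h1]
      _ ≤ ‖x + t • ν‖ * ‖ν‖ := abs_real_inner_le_norm _ _
      _ = ‖x + t • ν‖ := by rw [hν, mul_one]
      _ ≤ M := by simpa [mem_closedBall, dist_eq_norm] using hM ht
  have key : ∀ t₀ ∈ {t : ℝ | x + t • ν ∈ K}, ∃ tε : ℝ → ℝ,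
      (∀ᶠ ε in nhdsWithin 0 (Ioi (0 : ℝ)),
        tε ε ∈ {t : ℝ | x + t • ν ∈ {y ∈ Ω | infDist y K = ε}}) ∧
      Tendsto tε (nhdsWithin 0 (Ioi (0 : ℝ))) (nhds t₀) := by
    intro t₀ ht₀
    have hft₀ : f t₀ = 0 := (hf0 t₀).2 ht₀
    -- find δ > 0 so that no slice point lies in Ioc t₀ (t₀ + δ)
    have hC : IsClosed ({t : ℝ | x + t • ν ∈ K} \ {t₀}) :=
      (hfin.subset diff_subset).isClosed
    have ht₀C : t₀ ∈ ({t : ℝ | x + t • ν ∈ K} \ {t₀})ᶜ := by simp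
    obtain ⟨δ', hδ'pos, hδ'ball⟩ :=
      Metric.isOpen_iff.1 hC.isOpen_compl t₀ ht₀C
    set δ := δ' / 2 with hδdef
    have hδpos : 0 < δ := by positivity
    have hpos : ∀ s ∈ Ioc t₀ (t₀ + δ), 0 < f s := by
      intro s hs
      rcases (hfnonneg s).lt_or_eq with h | h
      · exact h
      · exfalso
        have hsK : x + s • ν ∈ K := (hf0 s).1 h.symm
        have hsball : s ∈ ball t₀ δ' := by
          rw [mem_ball, Real.dist_eq, abs_of_pos (by linarith [hs.1] : (0:ℝ) < s - t₀)]
          have := hs.2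
          rw [hδdef] at this
          linarith
        have := hδ'ball hsball
        exact this ⟨hsK, by intro h'; simp at h'; subst h'; exact lt_irrefl _ hs.1⟩
    have hc₁ : 0 < f (t₀ + δ) := hpos _ ⟨by linarith, le_refl _⟩
    set tε : ℝ → ℝ := fun ε => sInf (Icc t₀ (t₀ + δ) ∩ f ⁻¹' {ε}) with htεdef
    have hmem : ∀ ε : ℝ, 0 < ε → ε ≤ f (t₀ + δ) →
        tε ε ∈ Icc t₀ (t₀ + δ) ∩ f ⁻¹' {ε} := by
      intro ε hε1 hε2
      have hne' : (Icc t₀ (t₀ + δ) ∩ f ⁻¹' {ε}).Nonempty := by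
        have hsub := intermediate_value_Icc (by linarith : t₀ ≤ t₀ + δ) hf.continuousOn
        have hε' : ε ∈ Icc (f t₀) (f (t₀ + δ)) := by
          rw [hft₀]; exact ⟨hε1.le, hε2⟩
        obtain ⟨s, hs1, hs2⟩ := hsub hε'
        exact ⟨s, hs1, hs2⟩
      have hcl : IsClosed (Icc t₀ (t₀ + δ) ∩ f ⁻¹' {ε}) :=
        isClosed_Icc.inter (isClosed_singleton.preimage hf)
      exact hcl.csInf_mem hne' (bddBelow_Icc.mono inter_subset_left)
    have hconv : Tendsto tε (nhdsWithin 0 (Ioi (0 : ℝ))) (nhds t₀) := by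
      rw [Metric.tendsto_nhds]
      intro η hη
      set η' := min (η / 2) δ with hη'def
      have hη'pos : 0 < η' := lt_min (by linarith) hδpos
      have hη'δ : η' ≤ δ := min_le_right _ _
      have hη'η : η' ≤ η / 2 := min_le_left _ _
      have hc₂ : 0 < f (t₀ + η') := hpos _ ⟨by linarith, by linarith⟩
      filter_upwards [Ioo_mem_nhdsGT_of_mem
        (show (0:ℝ) ∈ Ico 0 (min (f (t₀ + η')) (f (t₀ + δ))) from
          ⟨le_refl _, lt_min hc₂ hc₁⟩)] with ε hε
      obtain ⟨hε1, hε2⟩ := hε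
      have hεc₁ : ε ≤ f (t₀ + δ) := (hε2.trans_le (min_le_right _ _)).le
      have hεc₂ : ε ≤ f (t₀ + η') := (hε2.trans_le (min_le_left _ _)).le
      have h1 := hmem ε hε1 hεc₁
      have hIVT : ∃ s ∈ Icc t₀ (t₀ + η'), f s = ε := by
        have hsub := intermediate_value_Icc (by linarith : t₀ ≤ t₀ + η') hf.continuousOn
        have hε' : ε ∈ Icc (f t₀) (f (t₀ + η')) := by rw [hft₀]; exact ⟨hε1.le, hεc₂⟩
        obtain ⟨s, hs1, hs2⟩ := hsub hε'
        exact ⟨s, hs1, hs2⟩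
      obtain ⟨s, hs, hfs⟩ := hIVT
      have hupper : tε ε ≤ s :=
        csInf_le (bddBelow_Icc.mono inter_subset_left)
          ⟨⟨hs.1, hs.2.trans (by linarith)⟩, hfs⟩
      have hlow : t₀ ≤ tε ε := h1.1.1
      rw [Real.dist_eq, abs_of_nonneg (by linarith)]
      have : s ≤ t₀ + η' := hs.2
      linarith
    refine ⟨tε, ?_, hconv⟩
    filter_upwards [Ioo_mem_nhdsGT_of_mem
      (show (0:ℝ) ∈ Ico 0 (min r (f (t₀ + δ))) from ⟨le_refl _, lt_min hr0 hc₁⟩)] with ε hε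
    obtain ⟨hε1, hε2⟩ := hε
    have hm := hmem ε hε1 ((hε2.trans_le (min_le_right _ _)).le)
    have hfε : f (tε ε) = ε := hm.2
    exact ⟨hΩmem _ (by rw [hfε]; exact hε2.trans_le (min_le_left _ _)), hfε⟩
  refine ⟨key, ?_⟩
  rw [Metric.tendsto_nhds]
  intro c hc
  -- direction: every slice point has a nearby point of the ε-slice
  have hd2 : ∀ᶠ ε in nhdsWithin 0 (Ioi (0 : ℝ)),
      ∀ t₀ ∈ {t : ℝ | x + t • ν ∈ K},
        ∃ t ∈ {t : ℝ | x + t • ν ∈ {y ∈ Ω | infDist y K = ε}}, dist t₀ t ≤ c / 2 := by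
    rw [hfin.eventually_all]
    intro t₀ ht₀
    obtain ⟨tε, h1, h2⟩ := key t₀ ht₀
    have h3 := Metric.tendsto_nhds.1 h2 (c / 2) (by linarith)
    filter_upwards [h1, h3] with ε hε1 hε2
    exact ⟨tε ε, hε1, by rw [dist_comm]; exact hε2.le⟩
  -- direction: every point of the ε-slice is near a slice point
  have hd1 : ∀ᶠ ε in nhdsWithin 0 (Ioi (0 : ℝ)),
      ∀ t ∈ {t : ℝ | x + t • ν ∈ {y ∈ Ω | infDist y K = ε}},
        ∃ t' ∈ {t : ℝ | x + t • ν ∈ K}, dist t t' ≤ c / 2 := by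
    set A := {t : ℝ | x + t • ν ∈ K} with hAdef
    set F := {t : ℝ | |t| ≤ M ∧ c / 2 ≤ infDist t A} with hFdef
    have hFclosed : IsClosed F := by
      have : F = {t : ℝ | |t| ≤ M} ∩ {t : ℝ | c / 2 ≤ infDist t A} := rfl
      rw [this]
      exact (isClosed_le continuous_abs continuous_const).inter
        (isClosed_le continuous_const (continuous_infDist_pt A))
    have hFcompact : IsCompact F := by
      refine (isCompact_Icc (a := -M) (b := M)).of_isClosed_subset hFclosed ?_
      intro t ht
      exact abs_le.1 ht.1
    have hFpos : ∀ t ∈ F, 0 < f t := by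
      intro t ht
      rcases (hfnonneg t).lt_or_eq with h | h
      · exact h
      · exfalso
        have htA : t ∈ A := (hf0 t).1 h.symm
        have h0 : infDist t A = 0 := infDist_zero_of_mem htA
        linarith [ht.2, h0, hc]
    by_cases hFne : F.Nonempty
    · obtain ⟨t', ht'F, ht'min⟩ := hFcompact.exists_isMinOn hFne hf.continuousOn
      have hm : 0 < f t' := hFpos t' ht'F
      filter_upwards [Ioo_mem_nhdsGT_of_mem
        (show (0:ℝ) ∈ Ico 0 (f t') from ⟨le_refl _, hm⟩)] with ε hε t ht
      obtain ⟨hε1, hε2⟩ := hε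
      have htM : |t| ≤ M := habs t ht.1
      have hfε : f t = ε := ht.2
      have htF : t ∉ F := by
        intro hF
        have h5 : f t' ≤ f t := ht'min hF
        rw [hfε] at h5
        linarith
      have hinf : infDist t A < c / 2 := by
        by_contra h
        exact htF ⟨htM, not_lt.1 h⟩
      obtain ⟨t'', ht''A, ht''d⟩ := (infDist_lt_iff hne).1 hinf
      exact ⟨t'', ht''A, ht''d.le⟩
    · filter_upwards [self_mem_nhdsWithin] with ε hε t ht
      have htM : |t| ≤ M := habs t ht.1
      have hinf : infDist t A < c / 2 := by
        by_contra h
        exact hFne ⟨t, htM, not_lt.1 h⟩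
      obtain ⟨t'', ht''A, ht''d⟩ := (infDist_lt_iff hne).1 hinf
      exact ⟨t'', ht''A, ht''d.le⟩
  filter_upwards [hd1, hd2] with ε h1 h2
  have hH : hausdorffDist {t : ℝ | x + t • ν ∈ {y ∈ Ω | infDist y K = ε}}
      {t : ℝ | x + t • ν ∈ K} ≤ c / 2 := by
    apply hausdorffDist_le_of_mem_dist (by linarith)
    · exact h1
    · intro t₀ ht₀
      obtain ⟨t, htmem, htd⟩ := h2 t₀ ht₀
      exact ⟨t, htmem, htd⟩
  rw [Real.dist_eq, sub_zero, abs_of_nonneg hausdorffDist_nonneg]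
  exact lt_of_le_of_lt hH (by linarith)
end

section
/- Let μ be an ℝ^d-valued finite Radon measure on an open set Ω ⊂ ℝ^N, let A ⊂ Ω be open, and let D be a dense subset of the unit sphere S^{d−1}. Then the total variation |μ|(A) equals the supremum over Borel functions ν : Ω → D that are constant on each cell of some rectangular division of ℝ^N with arbitrarily small mesh, of the total variations |⟨μ, ν⟩|(A) of the signed measures ⟨μ, ν⟩. -/
/-!
Since `f` and `ν` take unit values, `|⟪f, ν⟫| ≤ 1` and every candidate is at most `λ(A)`.
Conversely, approximate `f` in `L¹(λ)` by a continuous compactly supported `h`. It is uniformly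
continuous, so on a fine enough uniform grid it varies by less than `η` on each cell; on each cell
let `ν` be a point of `D` within `η` of the normalized value of `h` at the corner of the cell.
For unit `f`, `1 - |⟪f, ν⟫| ≤ ‖f - ν‖ ≤ 2 ‖f - h‖ + 3η`, and integrating over `A` gives
`λ(A) - ε`.
-/

open Set Filter MeasureTheory Metric
open scoped RealInnerProductSpace

section Normalize

variable {V : Type*} [NormedAddCommGroup V] [NormedSpace ℝ V]

open NormedSpace in
theorem norm_sub_normalize_le {f : V} (hf : ‖f‖ = 1) (w : V) :
    ‖f - normalize w‖ ≤ 2 * ‖f - w‖ := by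
  rcases eq_or_ne w 0 with rfl | hw
  · simp [normalize_zero_eq_zero, hf]
  have hnorm : ‖w - normalize w‖ = |‖w‖ - 1| := by
    have hw' : w - normalize w = (‖w‖ - 1) • normalize w := by
      rw [sub_smul, one_smul, norm_smul_normalize]
    rw [hw', norm_smul, norm_normalize hw, mul_one, Real.norm_eq_abs]
  calc ‖f - normalize w‖ ≤ ‖f - w‖ + ‖w - normalize w‖ := norm_sub_le_norm_sub_add_norm_sub _ _ _
    _ = ‖f - w‖ + |‖w‖ - ‖f‖| := by rw [hnorm, hf]
    _ ≤ ‖f - w‖ + ‖w - f‖ := by gcongr; exact abs_norm_sub_norm_le w f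
    _ = 2 * ‖f - w‖ := by rw [norm_sub_rev]; ring

theorem exists_mem_norm_sub_le_of_sphere_subset_closure {D : Set V}
    (hD : D ⊆ sphere 0 1) (hDdense : sphere 0 1 ⊆ closure D) (hne : D.Nonempty)
    {η : ℝ} (hη : 0 < η) (w : V) :
    ∃ e ∈ D, ∀ f : V, ‖f‖ = 1 → ‖f - e‖ ≤ 2 * ‖f - w‖ + η := by
  rcases eq_or_ne w 0 with rfl | hw
  · obtain ⟨e, he⟩ := hne
    refine ⟨e, he, fun f hf => ?_⟩
    have he1 : ‖e‖ = 1 := mem_sphere_zero_iff_norm.1 (hD he)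
    linarith [norm_sub_le f e, sub_zero f ▸ hf]
  obtain ⟨e, he, hdist⟩ := Metric.mem_closure_iff.1
    (hDdense (mem_sphere_zero_iff_norm.2 (NormedSpace.norm_normalize hw))) η hη
  refine ⟨e, he, fun f hf => ?_⟩
  calc ‖f - e‖ ≤ ‖f - NormedSpace.normalize w‖ + ‖NormedSpace.normalize w - e‖ :=
        norm_sub_le_norm_sub_add_norm_sub _ _ _
    _ ≤ 2 * ‖f - w‖ + η := add_le_add (norm_sub_normalize_le hf w) (dist_eq_norm _ e ▸ hdist.le)

end Normalize

theorem one_sub_abs_inner_le_norm_sub {E : Type*} [NormedAddCommGroup E] [InnerProductSpace ℝ E]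
    {f : E} (hf : ‖f‖ = 1) (e : E) : 1 - |⟪f, e⟫| ≤ ‖f - e‖ :=
  calc 1 - |⟪f, e⟫| ≤ ⟪f, f⟫ - ⟪f, e⟫ := by
        rw [real_inner_self_eq_norm_sq, hf, one_pow]; linarith [le_abs_self ⟪f, e⟫]
    _ = ⟪f, f - e⟫ := (inner_sub_right f f e).symm
    _ ≤ ‖f‖ * ‖f - e‖ := real_inner_le_norm _ _
    _ = ‖f - e‖ := by rw [hf, one_mul]

section Grid

variable {ι : Type*}

noncomputable def uniformGrid (s : ℝ) (j : ℤ) : ℝ := j * s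

noncomputable def gridIndex (s : ℝ) (x : EuclideanSpace ℝ ι) : ι → ℤ := fun i => ⌊x i / s⌋

noncomputable def gridCorner (s : ℝ) (J : ι → ℤ) : EuclideanSpace ℝ ι :=
  WithLp.toLp 2 fun i => uniformGrid s (J i)

variable {s : ℝ}

theorem gridCorner_apply (s : ℝ) (J : ι → ℤ) (i : ι) :
    gridCorner s J i = uniformGrid s (J i) :=
  rfl

theorem strictMono_uniformGrid (hs : 0 < s) : StrictMono (uniformGrid s) :=
  fun _ _ h => mul_lt_mul_of_pos_right (Int.cast_lt.2 h) hs

theorem uniformGrid_add_one (s : ℝ) (j : ℤ) : uniformGrid s (j + 1) = uniformGrid s j + s := by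
  simp only [uniformGrid]; push_cast; ring

theorem tendsto_uniformGrid_atTop (hs : 0 < s) : Tendsto (uniformGrid s) atTop atTop :=
  (tendsto_intCast_atTop_iff.2 tendsto_id).atTop_mul_const hs

theorem tendsto_uniformGrid_atBot (hs : 0 < s) : Tendsto (uniformGrid s) atBot atBot :=
  (tendsto_intCast_atBot_iff.2 tendsto_id).atBot_mul_const hs

theorem measurable_gridIndex [Fintype ι] (s : ℝ) : Measurable (gridIndex (ι := ι) s) :=
  measurable_pi_lambda _ fun i =>
    Int.measurable_floor.comp ((EuclideanSpace.proj i).continuous.measurable.div_const s)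

theorem mem_cell_gridIndex (hs : 0 < s) (x : EuclideanSpace ℝ ι) (i : ι) :
    uniformGrid s (gridIndex s x i) ≤ x i ∧ x i < uniformGrid s (gridIndex s x i + 1) := by
  rw [uniformGrid_add_one, uniformGrid, ← add_one_mul, ← le_div_iff₀ hs, ← div_lt_iff₀ hs]
  exact ⟨Int.floor_le _, Int.lt_floor_add_one _⟩

theorem gridIndex_eq_of_mem_cell (hs : 0 < s) {J : ι → ℤ} {y : EuclideanSpace ℝ ι}
    (hy : ∀ i, uniformGrid s (J i) ≤ y i ∧ y i < uniformGrid s (J i + 1)) :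
    gridIndex s y = J := by
  funext i
  obtain ⟨hlo, hhi⟩ := hy i
  rw [uniformGrid_add_one, uniformGrid, ← add_one_mul] at hhi
  rw [gridIndex, Int.floor_eq_iff, le_div_iff₀ hs, div_lt_iff₀ hs]
  exact ⟨hlo, hhi⟩

theorem dist_gridCorner_gridIndex_le [Fintype ι] (hs : 0 < s) (x : EuclideanSpace ℝ ι) :
    dist x (gridCorner s (gridIndex s x)) ≤ √(Fintype.card ι) * s := by
  have hcoord : ∀ i, dist (x i) (gridCorner s (gridIndex s x) i) ^ 2 ≤ s ^ 2 := fun i => by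
    obtain ⟨hlo, hhi⟩ := mem_cell_gridIndex hs x i
    rw [uniformGrid_add_one] at hhi
    rw [gridCorner_apply, Real.dist_eq, sq_abs]
    exact pow_le_pow_left₀ (by linarith) (by linarith) 2
  calc dist x (gridCorner s (gridIndex s x))
      = √(∑ i, dist (x i) (gridCorner s (gridIndex s x) i) ^ 2) := EuclideanSpace.dist_eq _ _
    _ ≤ √(∑ _i : ι, s ^ 2) := Real.sqrt_le_sqrt (Finset.sum_le_sum fun i _ => hcoord i)
    _ = √(Fintype.card ι) * s := by
        rw [Finset.sum_const, Finset.card_univ, nsmul_eq_mul, Real.sqrt_mul (Nat.cast_nonneg _),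
          Real.sqrt_sq hs.le]

theorem UniformContinuous.exists_dist_gridCorner_lt [Fintype ι] {F : Type*} [PseudoMetricSpace F]
    {h : EuclideanSpace ℝ ι → F} (hh : UniformContinuous h) {η : ℝ} (hη : 0 < η) :
    ∃ s > 0, ∀ x, dist (h x) (h (gridCorner s (gridIndex s x))) < η := by
  obtain ⟨δ, hδ, hδh⟩ := Metric.uniformContinuous_iff.1 hh η hη
  have hcard : 0 ≤ √(Fintype.card ι) := Real.sqrt_nonneg _
  refine ⟨δ / (√(Fintype.card ι) + 1), by positivity, fun x => hδh ?_⟩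
  calc dist x _ ≤ √(Fintype.card ι) * (δ / (√(Fintype.card ι) + 1)) :=
        dist_gridCorner_gridIndex_le (by positivity) x
    _ < δ := by
        rw [mul_div_assoc', div_lt_iff₀ (by positivity)]; nlinarith

end Grid

section Cellwise

variable {ι V : Type*}

def IsCellwiseConstantIn (a : ℤ → ℝ) (D : Set V) (ν : EuclideanSpace ℝ ι → V) : Prop :=
  ∀ J : ι → ℤ, ∃ e ∈ D, ∀ y : EuclideanSpace ℝ ι,
    (∀ i, a (J i) ≤ y i ∧ y i < a (J i + 1)) → ν y = e

theorem exists_isCellwiseConstantIn_norm_sub_le [Fintype ι] [NormedAddCommGroup V]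
    [NormedSpace ℝ V] [MeasurableSpace V] {D : Set V} (hD : D ⊆ sphere 0 1)
    (hDdense : sphere 0 1 ⊆ closure D) (hne : D.Nonempty)
    {h : EuclideanSpace ℝ ι → V} (hh : UniformContinuous h) {η : ℝ} (hη : 0 < η) :
    ∃ s > 0, ∃ ν : EuclideanSpace ℝ ι → V, Measurable ν ∧ (∀ y, ν y ∈ D) ∧
      IsCellwiseConstantIn (uniformGrid s) D ν ∧
      ∀ x (f : V), ‖f‖ = 1 → ‖f - ν x‖ ≤ 2 * ‖f - h x‖ + 3 * η := by
  choose c hcD hc using exists_mem_norm_sub_le_of_sphere_subset_closure hD hDdense hne hη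
  obtain ⟨s, hs, hsh⟩ := hh.exists_dist_gridCorner_lt hη
  refine ⟨s, hs, fun x => c (h (gridCorner s (gridIndex s x))),
    (measurable_of_countable (c ∘ h ∘ gridCorner s)).comp (measurable_gridIndex s),
    fun _ => hcD _,
    fun J => ⟨c (h (gridCorner s J)), hcD _, fun y hy => by
      simp only [gridIndex_eq_of_mem_cell hs hy]⟩,
    fun x f hf => ?_⟩
  calc ‖f - c (h (gridCorner s (gridIndex s x)))‖
      ≤ 2 * ‖f - h (gridCorner s (gridIndex s x))‖ + η := hc _ f hf
    _ ≤ 2 * (‖f - h x‖ + η) + η := by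
        gcongr
        exact norm_sub_le_norm_sub_add_norm_sub _ _ _ |>.trans
          (add_le_add_right (dist_eq_norm (h x) _ ▸ (hsh x).le) _)
    _ = 2 * ‖f - h x‖ + 3 * η := by ring

end Cellwise

section TotalVariation

variable {X E : Type*} [MeasurableSpace X] {μ : Measure X}
  [NormedAddCommGroup E] [InnerProductSpace ℝ E] {f ν : X → E}

theorem abs_inner_le_one_ae (hf : ∀ᵐ x ∂μ, ‖f x‖ ≤ 1) (hν : ∀ᵐ x ∂μ, ‖ν x‖ ≤ 1) :
    ∀ᵐ x ∂μ, |⟪f x, ν x⟫| ≤ 1 := by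
  filter_upwards [hf, hν] with x hfx hνx
  exact (abs_real_inner_le_norm _ _).trans (mul_le_one₀ hfx (norm_nonneg _) hνx)

variable [IsFiniteMeasure μ]

theorem setIntegral_abs_inner_le_measureReal (A : Set X)
    (hf : ∀ᵐ x ∂μ, ‖f x‖ ≤ 1) (hν : ∀ᵐ x ∂μ, ‖ν x‖ ≤ 1) :
    ∫ x in A, |⟪f x, ν x⟫| ∂μ ≤ μ.real A :=
  calc ∫ x in A, |⟪f x, ν x⟫| ∂μ ≤ ∫ _ in A, (1 : ℝ) ∂μ :=
        integral_mono_of_nonneg (ae_of_all _ fun _ => abs_nonneg _) (integrable_const 1)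
          (ae_restrict_of_ae (abs_inner_le_one_ae hf hν))
    _ = μ.real A := by simp

theorem integrable_abs_inner [MeasurableSpace E] [BorelSpace E] [SecondCountableTopology E]
    (hf : Measurable f) (hν : Measurable ν) (hf1 : ∀ᵐ x ∂μ, ‖f x‖ ≤ 1)
    (hν1 : ∀ᵐ x ∂μ, ‖ν x‖ ≤ 1) : Integrable (fun x => |⟪f x, ν x⟫|) μ :=
  .of_bound (hf.inner hν).abs.aestronglyMeasurable 1 <| by
    simpa only [Real.norm_eq_abs, abs_abs] using abs_inner_le_one_ae hf1 hν1

theorem measureReal_sub_setIntegral_le {φ ψ : X → ℝ} (A : Set X)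
    (hφ : Integrable φ (μ.restrict A)) (hψ : Integrable ψ (μ.restrict A))
    (hφψ : ∀ᵐ x ∂μ, 1 - φ x ≤ ψ x) :
    μ.real A - ∫ x in A, φ x ∂μ ≤ ∫ x in A, ψ x ∂μ := by
  rw [← mul_one (μ.real A), ← smul_eq_mul, ← setIntegral_const,
    ← integral_sub (integrable_const 1) hφ]
  exact integral_mono_ae ((integrable_const 1).sub hφ) hψ (ae_restrict_of_ae hφψ)

end TotalVariation

theorem exists_isCellwiseConstantIn_measureReal_sub_le {ι E : Type*} [Fintype ι]
    {μ : Measure (EuclideanSpace ℝ ι)} [IsFiniteMeasure μ]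
    [NormedAddCommGroup E] [InnerProductSpace ℝ E] [MeasurableSpace E] [BorelSpace E]
    [SecondCountableTopology E] {D : Set E} (hD : D ⊆ sphere 0 1)
    (hDdense : sphere 0 1 ⊆ closure D) (hne : D.Nonempty)
    {f : EuclideanSpace ℝ ι → E} (hf : Measurable f) (hfnorm : ∀ᵐ x ∂μ, ‖f x‖ = 1)
    (A : Set (EuclideanSpace ℝ ι)) {ε : ℝ} (hε : 0 < ε) :
    ∃ s > 0, ∃ ν : EuclideanSpace ℝ ι → E, Measurable ν ∧ (∀ y, ν y ∈ D) ∧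
      IsCellwiseConstantIn (uniformGrid s) D ν ∧ μ.real A - ε ≤ ∫ x in A, |⟪f x, ν x⟫| ∂μ := by
  have hfi : Integrable f μ := .of_bound hf.aestronglyMeasurable 1 (hfnorm.mono fun _ hx => hx.le)
  obtain ⟨h, hh_supp, hfh, hh_cont, hh_int⟩ :=
    hfi.exists_hasCompactSupport_integral_sub_le (ε := ε / 4) (by positivity)
  set M := μ.real univ
  have hM : 0 ≤ M := measureReal_nonneg
  set η := ε / (6 * (M + 1))
  obtain ⟨s, hs, ν, hνm, hνD, hνcell, hν⟩ := exists_isCellwiseConstantIn_norm_sub_le hD hDdense hne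
    (hh_supp.uniformContinuous_of_continuous hh_cont) (η := η) (by positivity)
  refine ⟨s, hs, ν, hνm, hνD, hνcell, ?_⟩
  have hfh_int : Integrable (fun x => ‖f x - h x‖) μ := (hfi.sub hh_int).norm
  have hν1 : ∀ᵐ x ∂μ, ‖ν x‖ ≤ 1 :=
    ae_of_all _ fun x => (mem_sphere_zero_iff_norm.1 (hD (hνD x))).le
  have hpointwise : ∀ᵐ x ∂μ, 1 - |⟪f x, ν x⟫| ≤ 2 * ‖f x - h x‖ + 3 * η :=
    hfnorm.mono fun x hx => (one_sub_abs_inner_le_norm_sub hx _).trans (hν x _ hx)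
  have hηM : 3 * η * M ≤ ε / 2 := by
    rw [show 3 * η * M = ε / 2 * (M / (M + 1)) by simp only [η]; field_simp; ring]
    exact mul_le_of_le_one_right (by positivity) ((div_le_one (by positivity)).2 (by linarith))
  have hdeficit : μ.real A - ∫ x in A, |⟪f x, ν x⟫| ∂μ ≤ ε :=
    calc μ.real A - ∫ x in A, |⟪f x, ν x⟫| ∂μ ≤ ∫ x in A, (2 * ‖f x - h x‖ + 3 * η) ∂μ :=
          measureReal_sub_setIntegral_le A
            (integrable_abs_inner hf hνm (hfnorm.mono fun _ hx => hx.le) hν1).restrict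
            ((hfh_int.const_mul 2).add (integrable_const _)).restrict hpointwise
      _ = 2 * ∫ x in A, ‖f x - h x‖ ∂μ + 3 * η * μ.real A := by
          rw [integral_add (hfh_int.const_mul 2).restrict (integrable_const _), integral_const_mul,
            setIntegral_const, smul_eq_mul, mul_comm (μ.real A)]
      _ ≤ 2 * (ε / 4) + 3 * η * M := by
          gcongr
          · exact (setIntegral_le_integral hfh_int (ae_of_all _ fun _ => norm_nonneg _)).trans hfh
          · exact measureReal_mono (subset_univ A)
      _ ≤ ε := by linarith
  linarith

theorem csSup_eq_of_forall_le_of_forall_lt_exists_gt' {α : Type*}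
    [ConditionallyCompleteLinearOrder α] [NoMinOrder α] {s : Set α} {b : α}
    (H : ∀ a ∈ s, a ≤ b) (H' : ∀ w < b, ∃ a ∈ s, w < a) : sSup s = b :=
  have ⟨w, hw⟩ := exists_lt b
  have ⟨a, ha, _⟩ := H' w hw
  csSup_eq_of_forall_le_of_forall_lt_exists_gt ⟨a, ha⟩ H H'

/-- The vector measure `μ` is encoded by its polar decomposition `μ = f • λ` with `λ = |μ|`,
so that `|⟨μ, ν⟩|(A) = ∫_A |⟪f, ν⟫| dλ`. -/
theorem stmt11_general (N d : ℕ) (A : Set (EuclideanSpace ℝ (Fin N)))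
    (lam : Measure (EuclideanSpace ℝ (Fin N))) [IsFiniteMeasure lam]
    (f : EuclideanSpace ℝ (Fin N) → EuclideanSpace ℝ (Fin d))
    (hf : Measurable f) (hfnorm : ∀ᵐ x ∂lam, ‖f x‖ = 1)
    (D : Set (EuclideanSpace ℝ (Fin d)))
    (hD : D ⊆ sphere (0 : EuclideanSpace ℝ (Fin d)) 1)
    (hDdense : sphere (0 : EuclideanSpace ℝ (Fin d)) 1 ⊆ closure D) :
    (lam A).toReal = sSup {v : ℝ |
      ∃ τ > (0 : ℝ), ∃ a : ℤ → ℝ,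
        StrictMono a ∧ (∀ j, a (j + 1) < a j + τ) ∧
        Tendsto a atTop atTop ∧ Tendsto a atBot atBot ∧
        ∃ ν : EuclideanSpace ℝ (Fin N) → EuclideanSpace ℝ (Fin d),
          Measurable ν ∧ (∀ y, ν y ∈ D) ∧
          (∀ J : Fin N → ℤ, ∃ e ∈ D, ∀ y : EuclideanSpace ℝ (Fin N),
            (∀ i, a (J i) ≤ y i ∧ y i < a (J i + 1)) → ν y = e) ∧
          v = ∫ x in A, |⟪f x, ν x⟫| ∂lam} := by
  rcases D.eq_empty_or_nonempty with rfl | hne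
  · obtain rfl : lam = 0 := by
      rw [← ae_eq_bot, ← eventually_false_iff_eq_bot]
      filter_upwards [hfnorm] with x hx
      simpa using hDdense (mem_sphere_zero_iff_norm.2 hx)
    simp
  refine (csSup_eq_of_forall_le_of_forall_lt_exists_gt' ?_ fun w hw => ?_).symm
  · rintro v ⟨τ, -, a, -, -, -, -, ν, -, hνD, -, rfl⟩
    exact setIntegral_abs_inner_le_measureReal A (hfnorm.mono fun _ hx => hx.le)
      (ae_of_all _ fun y => (mem_sphere_zero_iff_norm.1 (hD (hνD y))).le)
  · obtain ⟨s, hs, ν, hνm, hνD, hνcell, hν⟩ :=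
      exists_isCellwiseConstantIn_measureReal_sub_le hD hDdense hne hf hfnorm A
        (half_pos (sub_pos.2 hw))
    refine ⟨_, ⟨2 * s, by positivity, uniformGrid s, strictMono_uniformGrid hs,
      fun j => by rw [uniformGrid_add_one]; linarith, tendsto_uniformGrid_atTop hs,
      tendsto_uniformGrid_atBot hs, ν, hνm, hνD, hνcell, rfl⟩, ?_⟩
    rw [measureReal_def] at hν
    linarith

/-- A vector-valued finite Radon measure `μ` on `Ω ⊆ ℝ^N` is encoded by its polar
decomposition `μ = f · λ`, where `λ = |μ|` is a finite (positive) measure carried by `Ω`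
and `f` is a measurable density of unit norm `λ`-a.e.  Then for an open set `A ⊆ Ω` and a
dense subset `D` of the unit sphere of `ℝ^d`, the total variation `|μ|(A) = λ(A)` is the
supremum of the total variations `|⟨μ, ν⟩|(A) = ∫_A |⟨f, ν⟩| dλ` over all maps
`ν : Ω → D` that are constant on the cells of some `τ`-rectangular division with
arbitrarily small mesh `τ`. -/
theorem stmt11 (N d : ℕ) (Ω A : Set (EuclideanSpace ℝ (Fin N)))
    (hΩ : IsOpen Ω) (hA : IsOpen A) (hAΩ : A ⊆ Ω)
    (lam : Measure (EuclideanSpace ℝ (Fin N))) [IsFiniteMeasure lam]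
    (hcarrier : lam Ωᶜ = 0)
    (f : EuclideanSpace ℝ (Fin N) → EuclideanSpace ℝ (Fin d))
    (hf : Measurable f) (hfnorm : ∀ᵐ x ∂lam, ‖f x‖ = 1)
    (D : Set (EuclideanSpace ℝ (Fin d)))
    (hD : D ⊆ sphere (0 : EuclideanSpace ℝ (Fin d)) 1)
    (hDdense : sphere (0 : EuclideanSpace ℝ (Fin d)) 1 ⊆ closure D) :
    (lam A).toReal = sSup {v : ℝ |
      ∃ τ > (0 : ℝ), ∃ a : ℤ → ℝ,
        StrictMono a ∧ (∀ j, a (j + 1) < a j + τ) ∧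
        Tendsto a atTop atTop ∧ Tendsto a atBot atBot ∧
        ∃ ν : EuclideanSpace ℝ (Fin N) → EuclideanSpace ℝ (Fin d),
          Measurable ν ∧ (∀ y, ν y ∈ D) ∧
          (∀ J : Fin N → ℤ, ∃ e ∈ D, ∀ y : EuclideanSpace ℝ (Fin N),
            (∀ i, a (J i) ≤ y i ∧ y i < a (J i + 1)) → ν y = e) ∧
          v = ∫ x in A, |⟪f x, ν x⟫| ∂lam} :=
  stmt11_general N d A lam f hf hfnorm D hD hDdense
end

section
/- Let G = [0,1] ∖ ⋃_{n,a ≥ 1} ( a/2ⁿ − 1/2^{2n+1}, a/2ⁿ + 1/2^{2n+1} ). Then G is compact and ℒ¹(G) > 0. -/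
open Set MeasureTheory
open scoped ENNReal

/-- The basic interval centered at `a / 2^n` of radius `1 / 2^(2n+1)`. -/
def Iv (n a : ℕ) : Set ℝ :=
  Ioo ((a : ℝ) / 2 ^ n - 1 / 2 ^ (2 * n + 1)) ((a : ℝ) / 2 ^ n + 1 / 2 ^ (2 * n + 1))

lemma Iv_step (m b : ℕ) : Iv (m + 1) (2 * b) ⊆ Iv m b := by
  have hc : ((2 * b : ℕ) : ℝ) / 2 ^ (m + 1) = (b : ℝ) / 2 ^ m := by
    push_cast; field_simp; ring
  have hr : (1 : ℝ) / 2 ^ (2 * (m + 1) + 1) ≤ 1 / 2 ^ (2 * m + 1) := by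
    apply one_div_le_one_div_of_le (by positivity)
    apply pow_le_pow_right₀ (by norm_num) (by omega)
  unfold Iv
  rw [hc]
  exact Ioo_subset_Ioo (by linarith) (by linarith)

/-- The covering set. -/
def Vset : Set ℝ :=
  Ioo ((1 : ℝ) - 1 / 8) (1 + 1 / 8) ∪
    ⋃ n : ℕ, ⋃ a ∈ (Finset.Icc 1 (2 ^ (n + 1))).filter (fun a => Odd a), Iv (n + 1) a

lemma Iv_subset_Vset : ∀ n a : ℕ, 1 ≤ a → a ≤ 2 ^ (n + 1) → Iv (n + 1) a ⊆ Vset := by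
  intro n
  induction n with
  | zero =>
    intro a ha1 ha2
    interval_cases a
    · intro x hx
      exact Or.inr (mem_iUnion.2 ⟨0, mem_iUnion₂.2 ⟨1, by simp, hx⟩⟩)
    · intro x hx
      refine Or.inl ?_
      have : ((2 : ℕ) : ℝ) / 2 ^ 1 = 1 := by norm_num
      simpa [Iv, this, show (2 : ℝ) ^ (2 * 1 + 1) = 8 by norm_num] using hx
  | succ m ih =>
    intro a ha1 ha2
    rcases Nat.even_or_odd a with he | ho
    · obtain ⟨b, hb⟩ := he
      have hb' : a = 2 * b := by omega
      subst hb'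
      exact (Iv_step (m + 1) b).trans (ih b (by omega) (by
        have : 2 * b ≤ 2 * 2 ^ (m + 1) := by
          calc 2 * b ≤ 2 ^ (m + 1 + 1) := ha2
          _ = 2 * 2 ^ (m + 1) := by ring
        omega))
    · intro x hx
      refine Or.inr (mem_iUnion.2 ⟨m + 1, mem_iUnion₂.2 ⟨a, ?_, hx⟩⟩)
      simp only [Finset.mem_filter, Finset.mem_Icc]
      exact ⟨⟨ha1, ha2⟩, ho⟩

lemma odd_card_le (n : ℕ) :
    ((Finset.Icc 1 (2 ^ (n + 1))).filter (fun a => Odd a)).card ≤ 2 ^ n := by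
  have : ((Finset.Icc 1 (2 ^ (n + 1))).filter (fun a => Odd a)).card
      ≤ (Finset.Icc 1 (2 ^ n)).card := by
    apply Finset.card_le_card_of_injOn (fun a => (a + 1) / 2)
    · intro a ha
      simp only [Finset.mem_coe, Finset.mem_filter, Finset.mem_Icc] at ha ⊢
      obtain ⟨⟨h1, h2⟩, k, hk⟩ := ha
      have h2n : 1 ≤ 2 ^ n := Nat.one_le_two_pow
      have : 2 ^ (n + 1) = 2 * 2 ^ n := by ring
      omega
    · intro a ha b hb hab
      simp only [Finset.coe_filter, Finset.mem_Icc, mem_setOf_eq] at ha hb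
      obtain ⟨_, k, hk⟩ := ha
      obtain ⟨_, l, hl⟩ := hb
      simp only [] at hab
      omega
  simpa using this

lemma volume_Iv (n a : ℕ) :
    volume (Iv n a) = ENNReal.ofReal (2 / 2 ^ (2 * n + 1)) := by
  rw [Iv, Real.volume_Ioo]
  congr 1
  ring

lemma volume_Vset_le : volume Vset ≤ ENNReal.ofReal (3 / 4) := by
  have h1 : volume (Ioo ((1 : ℝ) - 1 / 8) (1 + 1 / 8)) = ENNReal.ofReal (1 / 4) := by
    rw [Real.volume_Ioo]; norm_num
  have h2 : volume (⋃ n : ℕ,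
      ⋃ a ∈ (Finset.Icc 1 (2 ^ (n + 1))).filter (fun a => Odd a), Iv (n + 1) a)
      ≤ ENNReal.ofReal (1 / 2) := by
    calc volume (⋃ n : ℕ,
        ⋃ a ∈ (Finset.Icc 1 (2 ^ (n + 1))).filter (fun a => Odd a), Iv (n + 1) a)
        ≤ ∑' n : ℕ, volume
          (⋃ a ∈ (Finset.Icc 1 (2 ^ (n + 1))).filter (fun a => Odd a), Iv (n + 1) a) :=
          measure_iUnion_le _
      _ ≤ ∑' n : ℕ, (2⁻¹ : ℝ≥0∞) ^ (n + 2) := by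
          apply ENNReal.tsum_le_tsum
          intro n
          calc volume (⋃ a ∈ (Finset.Icc 1 (2 ^ (n + 1))).filter (fun a => Odd a),
                Iv (n + 1) a)
              ≤ ∑ a ∈ (Finset.Icc 1 (2 ^ (n + 1))).filter (fun a => Odd a),
                volume (Iv (n + 1) a) := measure_biUnion_finset_le _ _
            _ = ((Finset.Icc 1 (2 ^ (n + 1))).filter (fun a => Odd a)).card
                • ENNReal.ofReal (2 / 2 ^ (2 * (n + 1) + 1)) := by
                rw [Finset.sum_congr rfl (fun a _ => volume_Iv (n + 1) a),
                  Finset.sum_const]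
            _ ≤ (2 ^ n : ℕ) • ENNReal.ofReal (2 / 2 ^ (2 * (n + 1) + 1)) := by
                exact nsmul_le_nsmul_left (by positivity) (odd_card_le n)
            _ = (2⁻¹ : ℝ≥0∞) ^ (n + 2) := by
                rw [nsmul_eq_mul]
                have : ENNReal.ofReal (2 / 2 ^ (2 * (n + 1) + 1))
                    = ENNReal.ofReal ((2⁻¹ : ℝ) ^ (2 * n + 2)) := by
                  congr 1
                  rw [inv_pow, show 2 * (n + 1) + 1 = (2 * n + 2) + 1 by ring, pow_succ]
                  field_simp
                rw [this, ENNReal.ofReal_pow (by norm_num),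
                  show ENNReal.ofReal (2⁻¹ : ℝ) = 2⁻¹ by
                    rw [ENNReal.ofReal_inv_of_pos (by norm_num)]; norm_num]
                push_cast
                rw [show 2 * n + 2 = n + (n + 2) by ring, pow_add, ← mul_assoc,
                  ← ENNReal.inv_pow,
                  ENNReal.mul_inv_cancel (pow_ne_zero n (by norm_num))
                    (ENNReal.pow_ne_top (by norm_num)), one_mul]
      _ = ∑' n : ℕ, (2⁻¹ : ℝ≥0∞) ^ 2 * (2⁻¹ : ℝ≥0∞) ^ n := by
          congr 1; ext n; rw [← pow_add]; ring_nf
      _ = (2⁻¹ : ℝ≥0∞) ^ 2 * (1 - 2⁻¹)⁻¹ := by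
          rw [ENNReal.tsum_mul_left, ENNReal.tsum_geometric]
      _ = ENNReal.ofReal (1 / 2) := by
          rw [show (1 - 2⁻¹ : ℝ≥0∞) = 2⁻¹ by
            rw [ENNReal.sub_eq_of_eq_add (by norm_num)]
            rw [ENNReal.inv_two_add_inv_two]]
          rw [pow_two, mul_assoc, ENNReal.mul_inv_cancel (by norm_num) (by norm_num),
            mul_one, one_div, ENNReal.ofReal_inv_of_pos (by norm_num),
            ENNReal.ofReal_ofNat]
  calc volume Vset ≤ ENNReal.ofReal (1 / 4) + ENNReal.ofReal (1 / 2) := by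
        rw [Vset]
        exact (measure_union_le _ _).trans (by rw [h1]; exact add_le_add_right h2 _)
    _ = ENNReal.ofReal (3 / 4) := by
        rw [← ENNReal.ofReal_add (by norm_num) (by norm_num)]
        norm_num

theorem stmt18
    (U : Set ℝ)
    (hU : U = ⋃ (n : ℕ) (_ : 1 ≤ n) (a : ℕ) (_ : 1 ≤ a) (_ : a ≤ 2 ^ n),
      Ioo ((a : ℝ) / 2 ^ n - 1 / 2 ^ (2 * n + 1))
          ((a : ℝ) / 2 ^ n + 1 / 2 ^ (2 * n + 1)))
    (G : Set ℝ) (hG : G = Icc (0 : ℝ) 1 \ U) :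
    IsCompact G ∧ 0 < volume G := by
  have hUopen : IsOpen U := by
    rw [hU]
    exact isOpen_iUnion fun n => isOpen_iUnion fun _ => isOpen_iUnion fun a =>
      isOpen_iUnion fun _ => isOpen_iUnion fun _ => isOpen_Ioo
  have hcompact : IsCompact G := by
    rw [hG]
    exact isCompact_Icc.diff hUopen
  refine ⟨hcompact, ?_⟩
  have hsub : U ⊆ Vset := by
    rw [hU]
    refine iUnion_subset fun n => iUnion_subset fun hn => iUnion_subset fun a =>
      iUnion_subset fun ha1 => iUnion_subset fun ha2 => ?_
    obtain ⟨m, rfl⟩ : ∃ m, n = m + 1 := ⟨n - 1, by omega⟩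
    exact Iv_subset_Vset m a ha1 ha2
  have hUle : volume U ≤ ENNReal.ofReal (3 / 4) := (measure_mono hsub).trans volume_Vset_le
  have hdiff : volume (Icc (0 : ℝ) 1) - volume U ≤ volume G := by
    rw [hG]
    exact le_measure_diff
  have hIcc : volume (Icc (0 : ℝ) 1) = ENNReal.ofReal 1 := by
    rw [Real.volume_Icc]; norm_num
  have : ENNReal.ofReal 1 - ENNReal.ofReal (3 / 4) ≤ volume G := by
    rw [hIcc] at hdiff
    exact le_trans (tsub_le_tsub_left hUle _) hdiff
  rw [← ENNReal.ofReal_sub 1 (by norm_num)] at this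
  exact lt_of_lt_of_le (ENNReal.ofReal_pos.2 (by norm_num)) this
end
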